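/- Consider the Probabilistic Serial mechanism, agent 1 with dichotomous utilities with interest set O̅, the truthful profile, and exhaustion time T of O̅. Suppose T < 1/2. Then in the modified eating process in which agent 1 is removed entirely (it never eats, while all other agents follow the normal rules), every item of O̅ is exhausted by time (3/2)·T. -/

import Mathlib

open MeasureTheory

/-- An execution of the Probabilistic Serial eating process with `n` agents and `m` items
(each of supply 1).  Agent `i` reports the strict preference order encoded by the injective
rank function `rk i` (`rk i j < rk i j'` means agent `i` ranks item `j` above item `j'`).
`active i t` tells whether agent `i` participates (eats at rate 1) at time `t`; the normal
scenario is `active = fun _ _ => True`, pausing/removing agents is modelled by making them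
inactive.  `eats i t = some j` means agent `i` is eating item `j` at time `t`, and `rem j t`
is the remaining supply of item `j` at time `t`: it equals `1` minus the total time agents
have spent eating `j` during `(0, t]`.  An active agent always eats its most preferred item
among those with positive remaining supply. -/
structure PSExec (n m : ℕ) (rk : Fin n → Fin m → ℕ) (active : Fin n → ℝ → Prop) where
  eats : Fin n → ℝ → Option (Fin m)
  rem : Fin m → ℝ → ℝ
  meas : ∀ i j, MeasurableSet {t : ℝ | eats i t = some j}
  rem_def : ∀ j, ∀ t : ℝ, 0 ≤ t →
    rem j t = 1 - ∑ i : Fin n,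
      (volume {s : ℝ | 0 < s ∧ s ≤ t ∧ eats i s = some j}).toReal
  eats_iff : ∀ i, ∀ t : ℝ, 0 ≤ t → active i t → ∀ j,
    (eats i t = some j ↔ 0 < rem j t ∧ ∀ j', 0 < rem j' t → rk i j ≤ rk i j')
  eats_none : ∀ i, ∀ t : ℝ, ¬ active i t → eats i t = none

namespace PSExec

variable {n m : ℕ} {rk : Fin n → Fin m → ℕ} {active : Fin n → ℝ → Prop}

/-- The total amount of item `j` eaten by agent `i` (the allocation `x i j`). -/
noncomputable def alloc (E : PSExec n m rk active) (i : Fin n) (j : Fin m) : ℝ :=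
  (volume {s : ℝ | 0 < s ∧ E.eats i s = some j}).toReal

/-- The expected utility of agent `i` with cardinal utilities `a`. -/
noncomputable def utility (E : PSExec n m rk active) (a : Fin m → ℝ) (i : Fin n) : ℝ :=
  ∑ j, a j * E.alloc i j

/-- Item `j` is exhausted exactly at time `τ`. -/
def exhaustedAt (E : PSExec n m rk active) (j : Fin m) (τ : ℝ) : Prop :=
  0 < τ ∧ E.rem j τ = 0 ∧ ∀ s : ℝ, 0 ≤ s → s < τ → 0 < E.rem j s

/-- Agent `i` is eating item `j` at the moment `τ`, in the left-limit sense (this is the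
sense used for "eating an item at the moment of its exhaustion"). -/
def eatsAt (E : PSExec n m rk active) (i : Fin n) (j : Fin m) (τ : ℝ) : Prop :=
  ∃ δ > 0, ∀ s : ℝ, τ - δ < s → s < τ → E.eats i s = some j

/-- `T` is the exact moment at which the last item of `Obar` is exhausted. -/
def exhaustTime (E : PSExec n m rk active) (Obar : Finset (Fin m)) (T : ℝ) : Prop :=
  (∀ j ∈ Obar, E.rem j T = 0) ∧ ∀ s : ℝ, 0 ≤ s → s < T → ∃ j ∈ Obar, 0 < E.rem j s

end PSExec

/-- Dichotomous cardinal utilities with interest set `Obar`. -/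
def dicho {m : ℕ} (Obar : Finset (Fin m)) : Fin m → ℝ :=
  fun j => if j ∈ Obar then 1 else 0

/-!
Removing agent `i1` can only slow down the consumption of every item. Up to time `T` every other
agent eats at full rate in both processes, so on the set `D` of items the truthful process has
exhausted by `T`, the modified process lags behind by at most `T` units in total. An item
`j ∈ Obar` was eaten by time `T` by at least three agents, since each of them ate at most
`T < 1/2` of it, hence by two agents other than `i1`. As long as `j` survives in the modified
process these two eat only items of `D` (everything they prefer to `j` was gone when they ate
`j`), which removes `T` more units of `D` during `(T, 3T/2]`. So `j` cannot outlast `3T/2`.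
-/

namespace PSExec

open Set Filter Topology

variable {n m : ℕ} {rk : Fin n → Fin m → ℕ} {active active' : Fin n → ℝ → Prop}
  (E : PSExec n m rk active) {i : Fin n} {j z : Fin m} {a b c t : ℝ}

def window (i : Fin n) (j : Fin m) (a b : ℝ) : Set ℝ :=
  {s | a < s ∧ s ≤ b ∧ E.eats i s = some j}

noncomputable def eatenBy (i : Fin n) (j : Fin m) (a b : ℝ) : ℝ :=
  (volume (E.window i j a b)).toReal

noncomputable def eaten (j : Fin m) (a b : ℝ) : ℝ :=
  ∑ i, E.eatenBy i j a b

lemma window_subset_Ioc : E.window i j a b ⊆ Ioc a b :=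
  fun _ hs => ⟨hs.1, hs.2.1⟩

lemma measurableSet_window : MeasurableSet (E.window i j a b) := by
  have h : E.window i j a b = Ioc a b ∩ {s | E.eats i s = some j} := by
    ext s; simp [window, and_assoc]
  exact h ▸ measurableSet_Ioc.inter (E.meas i j)

lemma volume_window_ne_top : volume (E.window i j a b) ≠ ⊤ :=
  ne_top_of_le_ne_top measure_Ioc_lt_top.ne (measure_mono E.window_subset_Ioc)

lemma eatenBy_nonneg : 0 ≤ E.eatenBy i j a b := ENNReal.toReal_nonneg

lemma eatenBy_le (hab : a ≤ b) : E.eatenBy i j a b ≤ b - a :=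
  ENNReal.toReal_le_of_le_ofReal (sub_nonneg.2 hab)
    ((measure_mono E.window_subset_Ioc).trans_eq Real.volume_Ioc)

lemma eatenBy_add (hab : a ≤ b) (hbc : b ≤ c) :
    E.eatenBy i j a b + E.eatenBy i j b c = E.eatenBy i j a c := by
  have hunion : E.window i j a b ∪ E.window i j b c = E.window i j a c := by
    ext s
    simp only [window, mem_union, mem_ofPred_eq]
    constructor
    · rintro (⟨h1, h2, h3⟩ | ⟨h1, h2, h3⟩)
      exacts [⟨h1, h2.trans hbc, h3⟩, ⟨hab.trans_lt h1, h2, h3⟩]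
    · rintro ⟨h1, h2, h3⟩
      rcases le_or_gt s b with h | h
      exacts [Or.inl ⟨h1, h, h3⟩, Or.inr ⟨h, h2, h3⟩]
  have hdisj : Disjoint (E.window i j a b) (E.window i j b c) :=
    disjoint_left.2 fun s hs hs' => (hs.2.1.trans_lt hs'.1).false
  rw [eatenBy, eatenBy, eatenBy, ← hunion, measure_union hdisj E.measurableSet_window,
    ENNReal.toReal_add E.volume_window_ne_top E.volume_window_ne_top]

lemma eaten_add (hab : a ≤ b) (hbc : b ≤ c) :
    E.eaten j a b + E.eaten j b c = E.eaten j a c := by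
  simp only [eaten, ← Finset.sum_add_distrib, E.eatenBy_add hab hbc]

lemma eaten_nonneg : 0 ≤ E.eaten j a b :=
  Finset.sum_nonneg fun _ _ => E.eatenBy_nonneg

lemma eaten_le (hab : a ≤ b) : E.eaten j a b ≤ n * (b - a) := by
  calc E.eaten j a b ≤ ∑ _i : Fin n, (b - a) := Finset.sum_le_sum fun _ _ => E.eatenBy_le hab
    _ = n * (b - a) := by simp [mul_sub]

lemma eaten_self : E.eaten j a a = 0 := by
  have h (i : Fin n) : E.window i j a a = ∅ :=
    subset_empty_iff.1 (E.window_subset_Ioc.trans_eq (Ioc_self a))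
  simp [eaten, eatenBy, h]

lemma rem_eq_one_sub_eaten (ht : 0 ≤ t) : E.rem j t = 1 - E.eaten j 0 t :=
  E.rem_def j t ht

lemma rem_zero : E.rem j 0 = 1 := by
  rw [E.rem_eq_one_sub_eaten le_rfl, eaten_self, sub_zero]

lemma rem_sub_rem (ha : 0 ≤ a) (hab : a ≤ b) : E.rem j a - E.rem j b = E.eaten j a b := by
  rw [E.rem_eq_one_sub_eaten ha, E.rem_eq_one_sub_eaten (ha.trans hab),
    ← E.eaten_add ha hab]
  ring

lemma rem_le_rem (ha : 0 ≤ a) (hab : a ≤ b) : E.rem j b ≤ E.rem j a := by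
  linarith [E.rem_sub_rem (j := j) ha hab, E.eaten_nonneg (j := j) (a := a) (b := b)]

lemma lipschitzOnWith_rem : LipschitzOnWith (n : NNReal) (E.rem j) (Ici 0) := by
  refine LipschitzOnWith.of_dist_le_mul fun x hx y hy => ?_
  wlog hxy : x ≤ y generalizing x y
  · rw [dist_comm, dist_comm x]; exact this y hy x hx (le_of_not_ge hxy)
  rw [Real.dist_eq, Real.dist_eq, abs_of_nonneg (sub_nonneg.2 (E.rem_le_rem hx hxy)),
    abs_of_nonpos (sub_nonpos.2 hxy), NNReal.coe_natCast, E.rem_sub_rem hx hxy]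
  linarith [E.eaten_le (j := j) hxy]

lemma continuousOn_rem : ContinuousOn (E.rem j) (Ici 0) :=
  E.lipschitzOnWith_rem.continuousOn

lemma active_of_eats (h : E.eats i t = some j) : active i t := by
  by_contra hi
  simp [E.eats_none i t hi] at h

lemma rem_pos_of_eats (ht : 0 ≤ t) (h : E.eats i t = some j) : 0 < E.rem j t :=
  ((E.eats_iff i t ht (E.active_of_eats h) j).1 h).1

lemma rk_le_of_eats (ht : 0 ≤ t) (h : E.eats i t = some j) (hz : 0 < E.rem z t) :
    rk i j ≤ rk i z :=
  ((E.eats_iff i t ht (E.active_of_eats h) j).1 h).2 z hz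

lemma exists_eats (ht : 0 ≤ t) (hi : active i t) (hz : 0 < E.rem z t) :
    ∃ j, E.eats i t = some j := by
  classical
  obtain ⟨j, hj, hmin⟩ := Finset.exists_min_image
    (Finset.univ.filter fun j => 0 < E.rem j t) (rk i) ⟨z, by simpa using hz⟩
  exact ⟨j, (E.eats_iff i t ht hi j).2
    ⟨(Finset.mem_filter.1 hj).2, fun j' hj' => hmin j' (by simpa using hj')⟩⟩

lemma eaten_eq_zero_of_rem_nonpos (ha : 0 ≤ a) (h : E.rem j a ≤ 0) : E.eaten j a b = 0 := by
  refine Finset.sum_eq_zero fun i _ => ?_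
  have hempty : E.window i j a b = ∅ := by
    refine eq_empty_of_forall_notMem fun s ⟨hs, _, heats⟩ => ?_
    have := E.rem_le_rem ha hs.le (j := j)
    linarith [E.rem_pos_of_eats (ha.trans hs.le) heats]
  simp [eatenBy, hempty]

lemma rem_nonneg (ht : 0 ≤ t) : 0 ≤ E.rem j t := by
  by_contra! hneg
  obtain ⟨u, ⟨hu, hut⟩, hu0⟩ := intermediate_value_Icc' ht
    (E.continuousOn_rem.mono Icc_subset_Ici_self) ⟨hneg.le, E.rem_zero.ge.trans' zero_le_one⟩
  have := E.rem_sub_rem hu hut (j := j)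
  rw [hu0, E.eaten_eq_zero_of_rem_nonpos hu hu0.le] at this
  linarith

lemma exists_exhaustedAt (ht : 0 ≤ t) (h : E.rem j t = 0) :
    ∃ τ ≤ t, E.exhaustedAt j τ := by
  set S := Icc 0 t ∩ E.rem j ⁻¹' {0}
  have hbdd : BddBelow S := ⟨0, fun s hs => hs.1.1⟩
  have hS : IsClosed S := (E.continuousOn_rem.mono Icc_subset_Ici_self)
    |>.preimage_isClosed_of_isClosed isClosed_Icc isClosed_singleton
  have hτ : sInf S ∈ S := hS.csInf_mem ⟨t, ⟨ht, le_rfl⟩, h⟩ hbdd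
  obtain ⟨⟨hτ0, hτt⟩, hτrem⟩ := hτ
  refine ⟨sInf S, hτt, hτ0.lt_of_ne ?_, hτrem, fun s hs hsτ => ?_⟩
  · rintro h0
    simp [← h0, E.rem_zero] at hτrem
  · refine (E.rem_nonneg hs).lt_of_ne fun h0 => ?_
    exact (csInf_le hbdd ⟨⟨hs, hsτ.le.trans hτt⟩, h0.symm⟩).not_gt hsτ

lemma sum_eatenBy_le (hab : a ≤ b) : ∑ j, E.eatenBy i j a b ≤ b - a := by
  have hdisj : PairwiseDisjoint ↑(Finset.univ : Finset (Fin m)) (E.window i · a b) :=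
    fun j _ j' _ hjj' => disjoint_left.2 fun s hs hs' =>
      hjj' (Option.some.inj (hs.2.2.symm.trans hs'.2.2))
  simp only [eatenBy]
  rw [← ENNReal.toReal_sum fun j _ => E.volume_window_ne_top, ← measure_biUnion_finset
    hdisj fun j _ => E.measurableSet_window]
  refine ENNReal.toReal_le_of_le_ofReal (sub_nonneg.2 hab) ?_
  rw [← Real.volume_Ioc]
  exact measure_mono (iUnion₂_subset fun j _ => E.window_subset_Ioc)

lemma sub_le_sum_eatenBy (D : Finset (Fin m)) (hab : a ≤ b)
    (h : ∀ s ∈ Ioo a b, ∃ j ∈ D, E.eats i s = some j) :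
    b - a ≤ ∑ j ∈ D, E.eatenBy i j a b := by
  have hcover : Ioo a b ⊆ ⋃ j ∈ D, E.window i j a b := fun s hs =>
    let ⟨j, hj, heats⟩ := h s hs
    mem_biUnion hj ⟨hs.1, hs.2.le, heats⟩
  simp only [eatenBy]
  rw [← ENNReal.toReal_ofReal (sub_nonneg.2 hab), ← Real.volume_Ioo,
    ← ENNReal.toReal_sum fun j _ => E.volume_window_ne_top]
  exact ENNReal.toReal_mono (ENNReal.sum_ne_top.2 fun j _ => E.volume_window_ne_top)
    ((measure_mono hcover).trans (measure_biUnion_finset_le D _))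

lemma eaten_le_eaten (E' : PSExec n m rk active')
    (h : ∀ i, ∀ s ∈ Ioc a b, E'.eats i s = some j → E.eats i s = some j) :
    E'.eaten j a b ≤ E.eaten j a b :=
  Finset.sum_le_sum fun i _ => ENNReal.toReal_mono E.volume_window_ne_top
    (measure_mono fun s hs => ⟨hs.1, hs.2.1, h i s ⟨hs.1, hs.2.1⟩ hs.2.2⟩)

lemma eventually_rem_pos (ht : 0 ≤ t) :
    ∀ᶠ s in 𝓝[>] t, ∀ z, 0 < E.rem z t → 0 < E.rem z s := by
  refine Filter.eventually_all.2 fun z => ?_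
  by_cases hz : 0 < E.rem z t
  · have hcont := ((E.continuousOn_rem (j := z)).continuousWithinAt (mem_Ici.2 ht)).mono
      (Ioi_subset_Ici ht)
    filter_upwards [hcont.eventually_const_lt hz] with s hs using fun _ => hs
  · exact Filter.Eventually.of_forall fun s h => absurd h hz

/-- An agent eating `z` in `E'` shortly after a time at which `E` is nowhere behind finds the same
items available in `E`, so it eats `z` in `E` as well; real induction spreads this over `[0, t]`. -/
lemma rem_le_rem_of_active_imp (E' : PSExec n m rk active')
    (hact : ∀ i t, active' i t → active i t) (ht : 0 ≤ t) : E.rem z t ≤ E'.rem z t := by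
  set S := {y | ∀ z, E.rem z y ≤ E'.rem z y}
  have hclosed : IsClosed (S ∩ Icc 0 t) := by
    have := (isClosed_Icc (a := 0) (b := t)).isClosed_le (f := fun y (z : Fin m) => E.rem z y)
      (g := fun y z => E'.rem z y)
      (continuousOn_pi.2 fun z => E.continuousOn_rem.mono Icc_subset_Ici_self)
      (continuousOn_pi.2 fun z => E'.continuousOn_rem.mono Icc_subset_Ici_self)
    rwa [inter_comm]
  refine hclosed.Icc_subset_of_forall_mem_nhdsWithin
    (fun z => by rw [E.rem_zero, E'.rem_zero]) (fun x ⟨hx, ⟨hx0, _⟩⟩ => ?_) ⟨ht, le_rfl⟩ z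
  obtain ⟨u, hxu, hu⟩ := mem_nhdsGT_iff_exists_Ioo_subset.1
    ((E.eventually_rem_pos hx0).and (E'.eventually_rem_pos hx0))
  refine mem_nhdsGT_iff_exists_Ioo_subset.2 ⟨u, hxu, fun y hy z => ?_⟩
  by_cases hz : 0 < E.rem z x
  · have hsub : ∀ i, ∀ s ∈ Ioc x y, E'.eats i s = some z → E.eats i s = some z := by
      intro i s hs heats
      have hsu : s ∈ Ioo x u := ⟨hs.1, hs.2.trans_lt hy.2⟩
      refine (E.eats_iff i s (hx0.trans hs.1.le) (hact i s (E'.active_of_eats heats)) z).2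
        ⟨(hu hsu).1 z hz, fun z' hz' => E'.rk_le_of_eats (hx0.trans hs.1.le) heats ?_⟩
      exact (hu hsu).2 z' ((hz'.trans_le (E.rem_le_rem hx0 hs.1.le)).trans_le (hx z'))
    linarith [E.rem_sub_rem hx0 hy.1.le (j := z), E'.rem_sub_rem hx0 hy.1.le (j := z),
      E.eaten_le_eaten E' hsub, hx z]
  · linarith [E.rem_le_rem hx0 hy.1.le (j := z), E'.rem_nonneg (hx0.trans hy.1.le) (j := z)]

noncomputable def exhaustedItems (b : ℝ) : Finset (Fin m) :=
  Finset.univ.filter fun z => E.rem z b = 0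

noncomputable def eaters (j : Fin m) (b : ℝ) : Finset (Fin n) :=
  Finset.univ.filter fun i => 0 < E.eatenBy i j 0 b

lemma exists_eats_of_mem_eaters (h : i ∈ E.eaters j b) :
    ∃ u ∈ Ioc 0 b, E.eats i u = some j := by
  have hpos : 0 < E.eatenBy i j 0 b := (Finset.mem_filter.1 h).2
  have hvol : volume (E.window i j 0 b) ≠ 0 := fun h0 => by simp [eatenBy, h0] at hpos
  obtain ⟨u, hu0, hub, heats⟩ := nonempty_of_measure_ne_zero hvol
  exact ⟨u, ⟨hu0, hub⟩, heats⟩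

lemma one_le_card_eaters_mul (hb : 0 ≤ b) (h : E.rem j b = 0) :
    1 ≤ (E.eaters j b).card * b := by
  have heaten : E.eaten j 0 b = 1 := by linarith [E.rem_eq_one_sub_eaten hb (j := j)]
  calc (1 : ℝ) = ∑ i ∈ E.eaters j b, E.eatenBy i j 0 b :=
        heaten.symm.trans
          (Finset.sum_filter_of_ne fun i _ hi => E.eatenBy_nonneg.lt_of_ne' hi).symm
    _ ≤ (E.eaters j b).card • b :=
        Finset.sum_le_card_nsmul _ _ _ fun i _ => (E.eatenBy_le hb).trans_eq (sub_zero b)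
    _ = (E.eaters j b).card * b := nsmul_eq_mul _ _

lemma rem_eq_zero_of_rk_le {u : ℝ} (hrk : Function.Injective (rk i)) (hu : 0 ≤ u) (hub : u ≤ b)
    (hate : E.eats i u = some j) (hjb : E.rem j b = 0) (hz : rk i z ≤ rk i j) :
    E.rem z b = 0 := by
  rcases eq_or_ne z j with rfl | hzj
  · exact hjb
  have hdead : ¬ 0 < E.rem z u := fun hpos =>
    hzj (hrk (hz.antisymm (E.rk_le_of_eats hu hate hpos)))
  exact le_antisymm ((E.rem_le_rem hu hub).trans (not_lt.1 hdead)) (E.rem_nonneg (hu.trans hub))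

lemma sub_le_sum_eatenBy_exhaustedItems (E' : PSExec n m rk active') {u : ℝ}
    (hrk : Function.Injective (rk i)) (hu : 0 ≤ u) (hub : u ≤ b) (hate : E.eats i u = some j)
    (hjb : E.rem j b = 0) (ha : 0 ≤ a) (hac : a ≤ c) (hact : ∀ s ∈ Ioo a c, active' i s)
    (halive : ∀ s ∈ Ioo a c, 0 < E'.rem j s) :
    c - a ≤ ∑ z ∈ E.exhaustedItems b, E'.eatenBy i z a c := by
  refine E'.sub_le_sum_eatenBy _ hac fun s hs => ?_
  obtain ⟨z, hz⟩ := E'.exists_eats (ha.trans hs.1.le) (hact s hs) (halive s hs)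
  refine ⟨z, Finset.mem_filter.2 ⟨Finset.mem_univ z, ?_⟩, hz⟩
  exact E.rem_eq_zero_of_rk_le hrk hu hub hate hjb
    (E'.rk_le_of_eats (ha.trans hs.1.le) hz (halive s hs))

section RemovedAgent

variable {i1 : Fin n} (E' : PSExec n m rk fun i _ => i ≠ i1) {T : ℝ}

lemma sum_rem_sub_rem_le (hb : 0 ≤ b) (halive : ∀ s ∈ Ioo 0 b, ∃ z, 0 < E'.rem z s) :
    ∑ z, (E'.rem z b - E.rem z b) ≤ b := by
  have hagent (i : Fin n) :
      ∑ z, E.eatenBy i z 0 b - ∑ z, E'.eatenBy i z 0 b ≤ if i = i1 then b else 0 := by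
    have hE := E.sum_eatenBy_le hb (i := i)
    split_ifs with hi
    · linarith [Finset.sum_nonneg fun z (_ : z ∈ Finset.univ) => E'.eatenBy_nonneg (i := i)
        (j := z) (a := 0) (b := b)]
    · have hE' := E'.sub_le_sum_eatenBy (i := i) Finset.univ hb fun s hs => by
        obtain ⟨z, hz⟩ := halive s hs
        obtain ⟨j, hj⟩ := E'.exists_eats hs.1.le hi hz
        exact ⟨j, Finset.mem_univ j, hj⟩
      linarith
  calc ∑ z, (E'.rem z b - E.rem z b) = ∑ z, (E.eaten z 0 b - E'.eaten z 0 b) :=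
        Finset.sum_congr rfl fun z _ => by
          rw [E.rem_eq_one_sub_eaten hb, E'.rem_eq_one_sub_eaten hb]; ring
    _ = ∑ i, (∑ z, E.eatenBy i z 0 b - ∑ z, E'.eatenBy i z 0 b) := by
        simp only [eaten, Finset.sum_sub_distrib]
        rw [Finset.sum_comm, Finset.sum_comm (f := fun z i => E'.eatenBy i z 0 b)]
    _ ≤ ∑ i, if i = i1 then b else 0 := Finset.sum_le_sum fun i _ => hagent i
    _ = b := by simp

lemma le_sum_eaten_exhaustedItems (hrk : ∀ i, Function.Injective (rk i)) (hT0 : 0 < T)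
    (hT : T < 1 / 2) (hj : E.rem j T = 0)
    (halive : ∀ s ∈ Ioo T (3 / 2 * T), 0 < E'.rem j s) :
    T ≤ ∑ z ∈ E.exhaustedItems T, E'.eaten z T (3 / 2 * T) := by
  have hcard : 2 ≤ ((E.eaters j T).erase i1).card := by
    have h := E.one_le_card_eaters_mul hT0.le hj
    have h3 : 2 < (E.eaters j T).card := by
      by_contra! hle
      have hle' : ((E.eaters j T).card : ℝ) ≤ 2 := by exact_mod_cast hle
      nlinarith [mul_le_mul_of_nonneg_right hle' hT0.le]
    have := Finset.pred_card_le_card_erase (s := E.eaters j T) (a := i1)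
    omega
  set A := (E.eaters j T).erase i1
  have hagent : ∀ i ∈ A, T / 2 ≤ ∑ z ∈ E.exhaustedItems T, E'.eatenBy i z T (3 / 2 * T) := by
    intro i hi
    obtain ⟨hi1, hiE⟩ := Finset.mem_erase.1 hi
    obtain ⟨u, hu, hate⟩ := E.exists_eats_of_mem_eaters hiE
    have := E.sub_le_sum_eatenBy_exhaustedItems E' (hrk i) hu.1.le hu.2 hate hj hT0.le
      (by linarith) (fun s _ => hi1) halive
    linarith
  calc T ≤ A.card • (T / 2) := by
        have hcard' : (2 : ℝ) ≤ A.card := by exact_mod_cast hcard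
        rw [nsmul_eq_mul]
        nlinarith [mul_le_mul_of_nonneg_right hcard' (half_pos hT0).le]
    _ ≤ ∑ i ∈ A, ∑ z ∈ E.exhaustedItems T, E'.eatenBy i z T (3 / 2 * T) :=
        Finset.card_nsmul_le_sum _ _ _ hagent
    _ ≤ ∑ i, ∑ z ∈ E.exhaustedItems T, E'.eatenBy i z T (3 / 2 * T) :=
        Finset.sum_le_sum_of_subset_of_nonneg (Finset.subset_univ A)
          fun i _ _ => Finset.sum_nonneg fun z _ => E'.eatenBy_nonneg
    _ = ∑ z ∈ E.exhaustedItems T, E'.eaten z T (3 / 2 * T) := Finset.sum_comm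

lemma rem_three_halves_mul_eq_zero (hrk : ∀ i, Function.Injective (rk i))
    (hact : ∀ i t, i ≠ i1 → active i t) (hT0 : 0 < T) (hT : T < 1 / 2) (hj : E.rem j T = 0)
    (hlive : ∀ s ∈ Ioo 0 T, ∃ z, 0 < E.rem z s) : E'.rem j (3 / 2 * T) = 0 := by
  by_contra hne
  have hpos : 0 < E'.rem j (3 / 2 * T) := (E'.rem_nonneg (by positivity)).lt_of_ne' hne
  have hmono (z : Fin m) {s : ℝ} (hs : 0 ≤ s) : E.rem z s ≤ E'.rem z s :=
    E.rem_le_rem_of_active_imp E' hact hs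
  set D := E.exhaustedItems T
  have hbefore : ∑ z ∈ D, E'.rem z T ≤ T :=
    calc ∑ z ∈ D, E'.rem z T = ∑ z ∈ D, (E'.rem z T - E.rem z T) :=
          Finset.sum_congr rfl fun z hz => by rw [(Finset.mem_filter.1 hz).2, sub_zero]
      _ ≤ ∑ z, (E'.rem z T - E.rem z T) :=
          Finset.sum_le_sum_of_subset_of_nonneg (Finset.subset_univ D)
            fun z _ _ => sub_nonneg.2 (hmono z hT0.le)
      _ ≤ T := E.sum_rem_sub_rem_le E' hT0.le fun s hs =>
          let ⟨z, hz⟩ := hlive s hs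
          ⟨z, hz.trans_le (hmono z hs.1.le)⟩
  have hafter := E.le_sum_eaten_exhaustedItems E' hrk hT0 hT hj fun s hs =>
    hpos.trans_le (E'.rem_le_rem (hT0.le.trans hs.1.le) hs.2.le)
  have heaten : ∑ z ∈ D, E'.rem z T - ∑ z ∈ D, E'.rem z (3 / 2 * T)
      = ∑ z ∈ D, E'.eaten z T (3 / 2 * T) := by
    rw [← Finset.sum_sub_distrib]
    exact Finset.sum_congr rfl fun z _ => E'.rem_sub_rem hT0.le (by linarith)
  have hjD : E'.rem j (3 / 2 * T) ≤ ∑ z ∈ D, E'.rem z (3 / 2 * T) :=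
    Finset.single_le_sum (f := fun z => E'.rem z (3 / 2 * T))
      (fun z _ => E'.rem_nonneg (by positivity)) (Finset.mem_filter.2 ⟨Finset.mem_univ j, hj⟩)
  linarith

end RemovedAgent

end PSExec

theorem removed_agent_exhaust_by_three_halves_T_general
    (n m : ℕ) (rk : Fin n → Fin m → ℕ) (hrk : ∀ i, Function.Injective (rk i))
    (i1 : Fin n) (Obar : Finset (Fin m))
    (E : PSExec n m rk (fun _ _ => True))
    (E' : PSExec n m rk (fun i _ => i ≠ i1))
    (T : ℝ) (hT : E.exhaustTime Obar T) (hT0 : 0 < T) (hThalf : T < 1 / 2) :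
    ∀ j ∈ Obar, ∃ τ : ℝ, τ ≤ (3 / 2) * T ∧ E'.exhaustedAt j τ := by
  intro j hj
  have hlive : ∀ s ∈ Set.Ioo 0 T, ∃ z, 0 < E.rem z s := fun s hs =>
    let ⟨z, _, hz⟩ := hT.2 s hs.1.le hs.2
    ⟨z, hz⟩
  exact E'.exists_exhaustedAt (by positivity) (E.rem_three_halves_mul_eq_zero E' hrk
    (fun _ _ _ => trivial) hT0 hThalf (hT.1 j hj) hlive)

/-- truthful profile, dichotomous utilities with interest set `Obar`, exhaustion
time `T < 1/2` of `Obar`: if agent 1 is removed entirely from the eating process, every item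
of `Obar` is exhausted by time `(3/2)·T`. -/
theorem removed_agent_exhaust_by_three_halves_T
    (n m : ℕ) (rk : Fin n → Fin m → ℕ) (hrk : ∀ i, Function.Injective (rk i))
    (i1 : Fin n) (Obar : Finset (Fin m))
    (htruth : ∀ j ∈ Obar, ∀ j' ∉ Obar, rk i1 j < rk i1 j')
    (E : PSExec n m rk (fun _ _ => True))
    (E' : PSExec n m rk (fun i _ => i ≠ i1))
    (T : ℝ) (hT : E.exhaustTime Obar T) (hT0 : 0 < T) (hThalf : T < 1 / 2) :
    ∀ j ∈ Obar, ∃ τ : ℝ, τ ≤ (3 / 2) * T ∧ E'.exhaustedAt j τ :=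
  removed_agent_exhaust_by_three_halves_T_general n m rk hrk i1 Obar E E' T hT hT0 hThalf
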